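/- Let K be a simplicial complex and Ω_K = ⊕_n Ω^n_K the graded algebra of simplicial forms with product (αβ)(x_0,…,x_{a+b}) = α(x_0,…,x_a)β(x_a,…,x_{a+b}). For q ∈ ℂ∖{0,1}, define d_q(ω)(x_0,…,x_{n+1}) = ∑_{k=0}^n q^k ω(x_0,…,x̂_k,…,x_{n+1}) − q^n ω(x_0,…,x_n). Then d_q satisfies the q-Leibniz rule: d_q(αβ) = d_q(α)β + q^a α d_q(β) for α ∈ Ω^a_K. -/
import Mathlib


/-- A simplicial `n`-form on a vertex set `K` is encoded as a function of
infinite tuples `ℕ → K` depending only on the coordinates `x 0, …, x n`. -/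
def IsSimpForm {K : Type*} (n : ℕ) (ω : (ℕ → K) → ℂ) : Prop :=
  ∀ x y : ℕ → K, (∀ i ≤ n, x i = y i) → ω x = ω y

/-- Product of an `a`-form and a `b`-form:
`(αβ)(x_0,…,x_{a+b}) = α(x_0,…,x_a) β(x_a,…,x_{a+b})`. -/
def simpFormMul {K : Type*} (a : ℕ) (α β : (ℕ → K) → ℂ) : (ℕ → K) → ℂ :=
  fun x => α x * β (fun i => x (a + i))

/-- The `q`-differential on `n`-forms:
`d_q(ω)(x_0,…,x_{n+1}) = ∑_{k=0}^n q^k ω(x_0,…,x̂_k,…,x_{n+1}) - q^n ω(x_0,…,x_n)`. -/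
noncomputable def simpFormD {K : Type*} (q : ℂ) (n : ℕ) (ω : (ℕ → K) → ℂ) : (ℕ → K) → ℂ :=
  fun x =>
    (∑ k ∈ Finset.range (n + 1), q ^ k * ω (fun i => if i < k then x i else x (i + 1)))
      - q ^ n * ω x

/-- for a simplicial complex `(K, S)` and `q ∈ ℂ ∖ {0,1}`, the
`q`-differential on simplicial forms satisfies the `q`-Leibniz rule
`d_q(αβ) = d_q(α)β + q^a α d_q(β)` for `α` an `a`-form, as functions on
ordered simplices. -/
theorem simplicial_forms_q_leibniz
    (K : Type*) [DecidableEq K] (S : Set (Finset K))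
    (hSne : ∀ X ∈ S, X.Nonempty)
    (hS : ∀ X ∈ S, ∀ Y ⊆ X, Y.Nonempty → Y ∈ S)
    (q : ℂ) (hq0 : q ≠ 0) (hq1 : q ≠ 1)
    (a b : ℕ) (α β : (ℕ → K) → ℂ)
    (hα : IsSimpForm a α) (hβ : IsSimpForm b β) :
    ∀ x : ℕ → K, (Finset.image (fun i : Fin (a + b + 2) => x i) Finset.univ) ∈ S →
      simpFormD q (a + b) (simpFormMul a α β) x
        = simpFormMul (a + 1) (simpFormD q a α) β x
          + q ^ a * simpFormMul a α (simpFormD q b β) x := by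
  intro x _
  simp only [simpFormD, simpFormMul]
  rw [show a + b + 1 = (a + 1) + b by ring, Finset.sum_range_add]
  rw [Finset.sum_range_succ' (fun j => q ^ j *
      β fun i => if i < j then x (a + i) else x (a + (i + 1)))]
  have h1 : ∀ k ∈ Finset.range (a + 1),
      q ^ k * (α (fun i => if i < k then x i else x (i + 1)) *
        β fun i => if a + i < k then x (a + i) else x (a + i + 1))
      = q ^ k * α (fun i => if i < k then x i else x (i + 1)) *
        β (fun i => x (a + 1 + i)) := by
    intro k hk
    rw [Finset.mem_range] at hk
    have : (fun i => if a + i < k then x (a + i) else x (a + i + 1))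
        = fun i => x (a + 1 + i) := by
      funext i
      rw [if_neg (by omega)]
      congr 1; omega
    rw [this]; ring
  rw [Finset.sum_congr rfl h1]
  have h2 : ∀ j ∈ Finset.range b,
      q ^ (a + 1 + j) * (α (fun i => if i < a + 1 + j then x i else x (i + 1)) *
        β fun i => if a + i < a + 1 + j then x (a + i) else x (a + i + 1))
      = q ^ a * α x * (q ^ (j + 1) *
        β fun i => if i < j + 1 then x (a + i) else x (a + (i + 1))) := by
    intro j hj
    have hα' : α (fun i => if i < a + 1 + j then x i else x (i + 1)) = α x := by
      apply hα
      intro i hi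
      exact if_pos (by omega)
    have hβ' : (fun i => if a + i < a + 1 + j then x (a + i) else x (a + i + 1))
        = fun i => if i < j + 1 then x (a + i) else x (a + (i + 1)) := by
      funext i
      by_cases h : i < j + 1
      · rw [if_pos (by omega), if_pos h]
      · rw [if_neg (by omega), if_neg h]
        congr 1
    rw [hα', hβ']
    ring
  rw [Finset.sum_congr rfl h2, ← Finset.mul_sum, ← Finset.sum_mul]
  have h3 : (β fun i => if i < 0 then x (a + i) else x (a + (i + 1)))
      = β fun i => x (a + 1 + i) := by
    congr 1; funext i
    rw [if_neg (by omega)]; congr 1; omega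
  rw [h3]
  ring
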